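/- Let (X, σ) be a minimal subshift and U, V ⊆ X nonempty clopen sets such that σ^{−1}(U), U, σ(U) ∪ σ^{−1}(V), V, σ(V) are pairwise disjoint. Then f_{σ(U) ∩ σ^{−1}(V)} = f_V f_U^{−1} f_V^{−1} f_U, where for a clopen set W with σ^{−1}(W), W, σ(W) pairwise disjoint, f_W denotes the element acting as σ on W ∪ σ^{−1}(W), as σ^{−2} on σ(W), and as the identity elsewhere. -/
import Mathlib


/-- The set of `n`-factors of a two-sided infinite word `w`. -/
def factorsZ {A : Type*} (w : ℤ → A) (n : ℕ) : Set (Fin n → A) :=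
  {u | ∃ k : ℤ, ∀ i : Fin n, u i = w (k + (i : ℤ))}

/-- The complexity function of a two-sided infinite word. -/
noncomputable def complexityZ {A : Type*} (w : ℤ → A) (n : ℕ) : ℕ :=
  Nat.card (factorsZ w n)

/-- `u` occurs in the length-`M` window of `w` starting at `k`. -/
def OccursIn {A : Type*} (w : ℤ → A) {n : ℕ} (u : Fin n → A) (k : ℤ) (M : ℕ) : Prop :=
  ∃ j : ℤ, k ≤ j ∧ j + (n : ℤ) ≤ k + (M : ℤ) ∧ ∀ i : Fin n, u i = w (j + (i : ℤ))

/-- `M` is a recurrence bound for length-`n` factors of `w`. -/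
def IsRecurrenceBound {A : Type*} (w : ℤ → A) (n M : ℕ) : Prop :=
  ∀ u ∈ factorsZ w n, ∀ k : ℤ, OccursIn w u k M

def UniformlyRecurrent {A : Type*} (w : ℤ → A) : Prop :=
  ∀ n : ℕ, ∃ M : ℕ, IsRecurrenceBound w n M

/-- The recurrence function of `w`. -/
noncomputable def recurrenceFn {A : Type*} (w : ℤ → A) (n : ℕ) : ℕ :=
  sInf {M | IsRecurrenceBound w n M}

def PeriodicWord {A : Type*} (w : ℤ → A) : Prop :=
  ∃ k : ℤ, 1 ≤ k ∧ ∀ i : ℤ, w (i + k) = w i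

/-- The `i`-th power of the shift: `(shiftFun i y) t = y (t + i)`. -/
def shiftFun {A : Type*} (i : ℤ) (y : ℤ → A) : ℤ → A := fun t => y (t + i)

/-- Image of a set of words under the `i`-th power of the shift. -/
def shiftSet {A : Type*} (i : ℤ) (W : Set (ℤ → A)) : Set (ℤ → A) := shiftFun i '' W
/-- The group of self-homeomorphisms of a space, under composition
(`(g * h) x = g (h x)`). -/
instance homeomorphGroup {Y : Type*} [TopologicalSpace Y] : Group (Y ≃ₜ Y) where
  mul g h := h.trans g
  one := Homeomorph.refl Y
  inv := Homeomorph.symm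
  mul_assoc _ _ _ := Homeomorph.ext fun _ => rfl
  one_mul _ := Homeomorph.ext fun _ => rfl
  mul_one _ := Homeomorph.ext fun _ => rfl
  inv_mul_cancel g := Homeomorph.ext fun y => g.symm_apply_apply y

/-- Membership in the topological full group of the shift on `X`: `g` admits a continuous
orbit cocycle `f` with `g p = σ^(f p) p`. -/
def InFullGroup {A : Type*} [TopologicalSpace A] (X : Set (ℤ → A)) (g : ↥X ≃ₜ ↥X) : Prop :=
  ∃ f : ↥X → ℤ, Continuous f ∧ ∀ p : ↥X, ((g p : ℤ → A)) = shiftFun (f p) (p : ℤ → A)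

/-- `g` is the homeomorphism `f_W`: it acts as `σ` on `W ∪ σ⁻¹(W)`, as `σ⁻²` on `σ(W)`,
and as the identity elsewhere. -/
def IsFOn {A : Type*} [TopologicalSpace A] (X W : Set (ℤ → A)) (g : ↥X ≃ₜ ↥X) : Prop :=
  ∀ p : ↥X,
    ((p : ℤ → A) ∈ W ∪ shiftSet (-1) W → ((g p : ℤ → A)) = shiftFun 1 (p : ℤ → A)) ∧
    ((p : ℤ → A) ∈ shiftSet 1 W → ((g p : ℤ → A)) = shiftFun (-2) (p : ℤ → A)) ∧
    ((p : ℤ → A) ∉ W ∪ shiftSet (-1) W ∪ shiftSet 1 W → g p = p)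

namespace Stmt14Aux

variable {A : Type*}

lemma shift_shift (i j : ℤ) (y : ℤ → A) : shiftFun i (shiftFun j y) = shiftFun (i + j) y := by
  funext t; simp [shiftFun, add_assoc]

lemma shift_zero (y : ℤ → A) : shiftFun 0 y = y := by funext t; simp [shiftFun]

lemma mem_shiftSet {i : ℤ} {W : Set (ℤ → A)} {y : ℤ → A} :
    y ∈ shiftSet i W ↔ shiftFun (-i) y ∈ W := by
  constructor
  · rintro ⟨w, hw, rfl⟩
    rwa [shift_shift, neg_add_cancel, shift_zero]
  · intro h
    exact ⟨_, h, by rw [shift_shift, add_neg_cancel, shift_zero]⟩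

lemma shift_mem_iff (j i : ℤ) (y : ℤ → A) (W : Set (ℤ → A)) :
    shiftFun j y ∈ shiftSet i W ↔ y ∈ shiftSet (i - j) W := by
  rw [mem_shiftSet, mem_shiftSet, shift_shift]
  have : -i + j = -(i - j) := by ring
  rw [this]

lemma mem_iff_shift (j : ℤ) (y : ℤ → A) (W : Set (ℤ → A)) :
    shiftFun j y ∈ W ↔ y ∈ shiftSet (-j) W := by
  rw [mem_shiftSet, neg_neg]

lemma shiftSet_zero (W : Set (ℤ → A)) : shiftSet 0 W = W := by
  ext y; rw [mem_shiftSet, neg_zero, shift_zero]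


lemma shiftSet_inter (i : ℤ) (S T : Set (ℤ → A)) :
    shiftSet i (S ∩ T) = shiftSet i S ∩ shiftSet i T := by
  ext y; simp [mem_shiftSet, Set.mem_inter_iff]

lemma shiftSet_shiftSet (i j : ℤ) (S : Set (ℤ → A)) :
    shiftSet i (shiftSet j S) = shiftSet (i + j) S := by
  ext y
  rw [mem_shiftSet, mem_shiftSet, mem_shiftSet, shift_shift]
  have : -j + -i = -(i + j) := by ring
  rw [this]

lemma inv_isFOn [TopologicalSpace A] {X W : Set (ℤ → A)} {g : ↥X ≃ₜ ↥X}
    (hg : IsFOn X W g)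
    (d1 : Disjoint (shiftSet (-1) W) W) (d2 : Disjoint W (shiftSet 1 W))
    (d3 : Disjoint (shiftSet (-1) W) (shiftSet 1 W)) (q : ↥X) :
    (((q : ℤ → A)) ∈ W ∪ shiftSet 1 W → ((g.symm q : ℤ → A)) = shiftFun (-1) (q : ℤ → A)) ∧
    (((q : ℤ → A)) ∈ shiftSet (-1) W → ((g.symm q : ℤ → A)) = shiftFun 2 (q : ℤ → A)) ∧
    (((q : ℤ → A)) ∉ W ∪ shiftSet (-1) W ∪ shiftSet 1 W → g.symm q = q) := by
  have hgp : g (g.symm q) = q := g.apply_symm_apply q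
  obtain ⟨hA, hB, hC⟩ := hg (g.symm q)
  by_cases h1 : ((g.symm q : ℤ → A)) ∈ W ∪ shiftSet (-1) W
  · have hq1 : (q : ℤ → A) = shiftFun 1 (g.symm q : ℤ → A) := by
      conv_lhs => rw [← hgp]
      exact hA h1
    have hpq : ((g.symm q : ℤ → A)) = shiftFun (-1) (q : ℤ → A) := by
      rw [hq1, shift_shift]; norm_num [shift_zero]
    rcases h1 with hW | hW'
    · have hqW : (q : ℤ → A) ∈ shiftSet 1 W := by
        rw [hq1, shift_mem_iff]
        simpa [shiftSet_zero] using hW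
      refine ⟨fun _ => hpq, fun hq2 => ?_, fun hq3 => ?_⟩
      · exact absurd hqW (Set.disjoint_left.mp d3 hq2)
      · exact absurd (Or.inr hqW) hq3
    · have hqW : (q : ℤ → A) ∈ W := by
        rw [hq1, mem_iff_shift]
        simpa using hW'
      refine ⟨fun _ => hpq, fun hq2 => ?_, fun hq3 => ?_⟩
      · exact absurd hqW (Set.disjoint_left.mp d1 hq2)
      · exact absurd (Or.inl (Or.inl hqW)) hq3
  · by_cases h2 : ((g.symm q : ℤ → A)) ∈ shiftSet 1 W
    · have hq1 : (q : ℤ → A) = shiftFun (-2) (g.symm q : ℤ → A) := by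
        conv_lhs => rw [← hgp]
        exact hB h2
      have hpq : ((g.symm q : ℤ → A)) = shiftFun 2 (q : ℤ → A) := by
        rw [hq1, shift_shift]; norm_num [shift_zero]
      have hqW : (q : ℤ → A) ∈ shiftSet (-1) W := by
        rw [hq1, shift_mem_iff]
        norm_num
        exact h2
      refine ⟨fun hq2 => ?_, fun _ => hpq, fun hq3 => ?_⟩
      · rcases hq2 with h | h
        · exact absurd h (Set.disjoint_left.mp d1 hqW)
        · exact absurd h (Set.disjoint_left.mp d3 hqW)
      · exact absurd (Or.inl (Or.inr hqW)) hq3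
    · have hfix : g (g.symm q) = g.symm q := hC (by
        intro h; rcases h with h | h
        · exact h1 h
        · exact h2 h)
      have hqp : g.symm q = q := by
        conv_rhs => rw [← hgp, hfix]
      have hval : ((g.symm q : ℤ → A)) = (q : ℤ → A) := congrArg Subtype.val hqp
      have h1' : (q : ℤ → A) ∉ W ∪ shiftSet (-1) W := by rwa [hval] at h1
      have h2' : (q : ℤ → A) ∉ shiftSet 1 W := by rwa [hval] at h2
      refine ⟨fun hq2 => ?_, fun hq2 => ?_, fun _ => hqp⟩
      · rcases hq2 with h | h
        · exact absurd (Or.inl h) h1'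
        · exact absurd h h2'
      · exact absurd (Or.inr hq2) h1'

end Stmt14Aux

open Stmt14Aux in
/-- if `σ⁻¹(U), U, σ(U) ∪ σ⁻¹(V), V, σ(V)` are pairwise disjoint, then
`f_{σ(U) ∩ σ⁻¹(V)} = f_V f_U⁻¹ f_V⁻¹ f_U`. -/
theorem stmt14 {A : Type*} [Fintype A] [TopologicalSpace A] [DiscreteTopology A]
    (x : ℤ → A) (hUR : UniformlyRecurrent x) (hNP : ¬ PeriodicWord x)
    (X : Set (ℤ → A)) (hX : X = closure (Set.range fun n : ℤ => shiftFun n x))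
    (U V : Set (ℤ → A)) (hUX : U ⊆ X) (hVX : V ⊆ X)
    (hUne : U.Nonempty) (hVne : V.Nonempty)
    (hUclopen : IsClopen (Subtype.val ⁻¹' U : Set ↥X))
    (hVclopen : IsClopen (Subtype.val ⁻¹' V : Set ↥X))
    (hdisj : List.Pairwise Disjoint
      [shiftSet (-1) U, U, shiftSet 1 U ∪ shiftSet (-1) V, V, shiftSet 1 V])
    (gU gV gW : ↥X ≃ₜ ↥X)
    (hgU : IsFOn X U gU) (hgV : IsFOn X V gV)
    (hgW : IsFOn X (shiftSet 1 U ∩ shiftSet (-1) V) gW) :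
    gW = gV * gU⁻¹ * gV⁻¹ * gU := by
  clear hUR hNP hX hUX hVX hUne hVne hUclopen hVclopen
  simp only [List.pairwise_cons, List.mem_cons, List.not_mem_nil, or_false,
    forall_eq_or_imp, forall_eq, List.Pairwise.nil] at hdisj
  obtain ⟨⟨d12, d13, d14, d15⟩, ⟨d23, d24, d25⟩, ⟨d34, d35⟩, ⟨d45, -⟩⟩ := hdisj
  have nm : ∀ {S T : Set (ℤ → A)}, Disjoint S T → ∀ {y : ℤ → A}, y ∈ S → y ∉ T :=
    fun {S T} d {y} h => Set.disjoint_left.mp d h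
  have dU2 : Disjoint U (shiftSet 1 U) := d23.mono_right Set.subset_union_left
  have dU3 : Disjoint (shiftSet (-1) U) (shiftSet 1 U) := d13.mono_right Set.subset_union_left
  have dV1 : Disjoint (shiftSet (-1) V) V := d34.mono_left Set.subset_union_right
  have dV3 : Disjoint (shiftSet (-1) V) (shiftSet 1 V) := d35.mono_left Set.subset_union_right
  have hinvU := fun q => inv_isFOn hgU d12 dU2 dU3 q
  have hinvV := fun q => inv_isFOn hgV dV1 d45 dV3 q
  have hWm : shiftSet (-1) (shiftSet 1 U ∩ shiftSet (-1) V) = U ∩ shiftSet (-2) V := by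
    rw [shiftSet_inter, shiftSet_shiftSet, shiftSet_shiftSet]
    norm_num [shiftSet_zero]
  have hWp : shiftSet 1 (shiftSet 1 U ∩ shiftSet (-1) V) = shiftSet 2 U ∩ V := by
    rw [shiftSet_inter, shiftSet_shiftSet, shiftSet_shiftSet]
    norm_num [shiftSet_zero]
  refine Homeomorph.ext fun p => ?_
  show gW p = gV (gU.symm (gV.symm (gU p)))
  by_cases h1 : (p : ℤ → A) ∈ shiftSet (-1) U
  · -- Case 1 : p ∈ σ⁻¹U
    have e1 : ((gU p : ℤ → A)) = shiftFun 1 (p : ℤ → A) := (hgU p).1 (Or.inr h1)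
    have m1 : ((gU p : ℤ → A)) ∈ U := by
      rw [e1, mem_iff_shift]; exact h1
    have e2 : gV.symm (gU p) = gU p := (hinvV (gU p)).2.2 (by
      rintro ((h | h) | h)
      · exact nm d24 m1 h
      · exact nm d23 m1 (Or.inr h)
      · exact nm d25 m1 h)
    have e3 : ((gU.symm (gV.symm (gU p)) : ℤ → A)) = shiftFun (-1) ((gV.symm (gU p) : ℤ → A)) :=
      (hinvU _).1 (by rw [e2]; exact Or.inl m1)
    have e3' : ((gU.symm (gV.symm (gU p)) : ℤ → A)) = (p : ℤ → A) := by
      rw [e3, e2, e1, shift_shift]; norm_num [shift_zero]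
    have e4 : gV (gU.symm (gV.symm (gU p))) = gU.symm (gV.symm (gU p)) := (hgV _).2.2 (by
      rw [e3']
      rintro ((h | h) | h)
      · exact nm d14 h1 h
      · exact nm d13 h1 (Or.inr h)
      · exact nm d15 h1 h)
    have eL : gW p = p := (hgW p).2.2 (by
      rintro ((⟨hu, hv⟩ | h) | h)
      · exact nm dU3 h1 hu
      · rw [hWm] at h; exact nm d12 h1 h.1
      · rw [hWp] at h; exact nm d14 h1 h.2)
    rw [eL, e4]
    exact (Subtype.ext e3').symm
  by_cases h2 : (p : ℤ → A) ∈ U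
  · by_cases hb : (p : ℤ → A) ∈ shiftSet (-2) V
    · -- Case 2b : p ∈ U ∩ σ⁻²V
      have e1 : ((gU p : ℤ → A)) = shiftFun 1 (p : ℤ → A) := (hgU p).1 (Or.inl h2)
      have m1V : ((gU p : ℤ → A)) ∈ shiftSet (-1) V := by
        rw [e1, shift_mem_iff]; norm_num; exact hb
      have e2 : ((gV.symm (gU p) : ℤ → A)) = shiftFun 2 ((gU p : ℤ → A)) := (hinvV _).2.1 m1V
      have e2' : ((gV.symm (gU p) : ℤ → A)) = shiftFun 3 (p : ℤ → A) := by
        rw [e2, e1, shift_shift]; norm_num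
      have m2 : ((gV.symm (gU p) : ℤ → A)) ∈ shiftSet 1 V := by
        rw [e2', shift_mem_iff]; norm_num; exact hb
      have e3 : gU.symm (gV.symm (gU p)) = gV.symm (gU p) := (hinvU _).2.2 (by
        rintro ((h | h) | h)
        · exact nm d25 h m2
        · exact nm d15 h m2
        · exact nm d35 (Or.inl h) m2)
      have e4 : ((gV (gU.symm (gV.symm (gU p))) : ℤ → A)) =
          shiftFun (-2) ((gU.symm (gV.symm (gU p)) : ℤ → A)) :=
        (hgV _).2.1 (by rw [e3]; exact m2)
      have e4' : ((gV (gU.symm (gV.symm (gU p))) : ℤ → A)) = shiftFun 1 (p : ℤ → A) := by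
        rw [e4, e3, e2', shift_shift]; norm_num
      have eL : ((gW p : ℤ → A)) = shiftFun 1 (p : ℤ → A) :=
        (hgW p).1 (Or.inr (by rw [hWm]; exact ⟨h2, hb⟩))
      exact Subtype.ext (by rw [eL, e4'])
    · -- Case 2a : p ∈ U, p ∉ σ⁻²V
      have e1 : ((gU p : ℤ → A)) = shiftFun 1 (p : ℤ → A) := (hgU p).1 (Or.inl h2)
      have m1 : ((gU p : ℤ → A)) ∈ shiftSet 1 U := by
        rw [e1, shift_mem_iff]; norm_num [shiftSet_zero]; exact h2
      have e2 : gV.symm (gU p) = gU p := (hinvV (gU p)).2.2 (by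
        rintro ((h | h) | h)
        · exact nm d34 (Or.inl m1) h
        · rw [e1, shift_mem_iff] at h; norm_num at h; exact hb h
        · exact nm d35 (Or.inl m1) h)
      have e3 : ((gU.symm (gV.symm (gU p)) : ℤ → A)) = shiftFun (-1) ((gV.symm (gU p) : ℤ → A)) :=
        (hinvU _).1 (by rw [e2]; exact Or.inr m1)
      have e3' : ((gU.symm (gV.symm (gU p)) : ℤ → A)) = (p : ℤ → A) := by
        rw [e3, e2, e1, shift_shift]; norm_num [shift_zero]
      have e4 : gV (gU.symm (gV.symm (gU p))) = gU.symm (gV.symm (gU p)) := (hgV _).2.2 (by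
        rw [e3']
        rintro ((h | h) | h)
        · exact nm d24 h2 h
        · exact nm d23 h2 (Or.inr h)
        · exact nm d25 h2 h)
      have eL : gW p = p := (hgW p).2.2 (by
        rintro ((⟨hu, hv⟩ | h) | h)
        · exact nm dU2 h2 hu
        · rw [hWm] at h; exact hb h.2
        · rw [hWp] at h; exact nm d24 h2 h.2)
      rw [eL, e4]
      exact (Subtype.ext e3').symm
  by_cases h3 : (p : ℤ → A) ∈ shiftSet 1 U
  · have e1 : ((gU p : ℤ → A)) = shiftFun (-2) (p : ℤ → A) := (hgU p).2.1 h3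
    have m1 : ((gU p : ℤ → A)) ∈ shiftSet (-1) U := by
      rw [e1, shift_mem_iff]; norm_num; exact h3
    have e2 : gV.symm (gU p) = gU p := (hinvV (gU p)).2.2 (by
      rintro ((h | h) | h)
      · exact nm d14 m1 h
      · exact nm d13 m1 (Or.inr h)
      · exact nm d15 m1 h)
    have e3 : ((gU.symm (gV.symm (gU p)) : ℤ → A)) = shiftFun 2 ((gV.symm (gU p) : ℤ → A)) :=
      (hinvU _).2.1 (by rw [e2]; exact m1)
    have e3' : ((gU.symm (gV.symm (gU p)) : ℤ → A)) = (p : ℤ → A) := by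
      rw [e3, e2, e1, shift_shift]; norm_num [shift_zero]
    by_cases h4 : (p : ℤ → A) ∈ shiftSet (-1) V
    · -- Case 3c : p ∈ σU ∩ σ⁻¹V
      have e4 : ((gV (gU.symm (gV.symm (gU p))) : ℤ → A)) =
          shiftFun 1 ((gU.symm (gV.symm (gU p)) : ℤ → A)) :=
        (hgV _).1 (Or.inr (by rw [e3']; exact h4))
      have e4' : ((gV (gU.symm (gV.symm (gU p))) : ℤ → A)) = shiftFun 1 (p : ℤ → A) := by
        rw [e4, e3']
      have eL : ((gW p : ℤ → A)) = shiftFun 1 (p : ℤ → A) := (hgW p).1 (Or.inl ⟨h3, h4⟩)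
      exact Subtype.ext (by rw [eL, e4'])
    · -- Case 3a : p ∈ σU, p ∉ σ⁻¹V
      have e4 : gV (gU.symm (gV.symm (gU p))) = gU.symm (gV.symm (gU p)) := (hgV _).2.2 (by
        rw [e3']
        rintro ((h | h) | h)
        · exact nm d34 (Or.inl h3) h
        · exact h4 h
        · exact nm d35 (Or.inl h3) h)
      have eL : gW p = p := (hgW p).2.2 (by
        rintro ((⟨hu, hv⟩ | h) | h)
        · exact h4 hv
        · rw [hWm] at h; exact nm dU2 h.1 h3
        · rw [hWp] at h; exact nm d34 (Or.inl h3) h.2)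
      rw [eL, e4]
      exact (Subtype.ext e3').symm
  by_cases h4 : (p : ℤ → A) ∈ shiftSet (-1) V
  · -- Case 3b : p ∈ σ⁻¹V, p ∉ σU
    have e1 : gU p = p := (hgU p).2.2 (by
      rintro ((h | h) | h)
      · exact nm d23 h (Or.inr h4)
      · exact nm d13 h (Or.inr h4)
      · exact h3 h)
    have m1 : ((gU p : ℤ → A)) ∈ shiftSet (-1) V := by rw [e1]; exact h4
    have e2 : ((gV.symm (gU p) : ℤ → A)) = shiftFun 2 ((gU p : ℤ → A)) := (hinvV _).2.1 m1
    have e2' : ((gV.symm (gU p) : ℤ → A)) = shiftFun 2 (p : ℤ → A) := by rw [e2, e1]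
    have m2 : ((gV.symm (gU p) : ℤ → A)) ∈ shiftSet 1 V := by
      rw [e2', shift_mem_iff]; norm_num; exact h4
    have e3 : gU.symm (gV.symm (gU p)) = gV.symm (gU p) := (hinvU _).2.2 (by
      rintro ((h | h) | h)
      · exact nm d25 h m2
      · exact nm d15 h m2
      · exact nm d35 (Or.inl h) m2)
    have e4 : ((gV (gU.symm (gV.symm (gU p))) : ℤ → A)) =
        shiftFun (-2) ((gU.symm (gV.symm (gU p)) : ℤ → A)) :=
      (hgV _).2.1 (by rw [e3]; exact m2)
    have e4' : ((gV (gU.symm (gV.symm (gU p))) : ℤ → A)) = (p : ℤ → A) := by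
      rw [e4, e3, e2', shift_shift]; norm_num [shift_zero]
    have eL : gW p = p := (hgW p).2.2 (by
      rintro ((⟨hu, hv⟩ | h) | h)
      · exact h3 hu
      · rw [hWm] at h; exact nm d23 h.1 (Or.inr h4)
      · rw [hWp] at h; exact nm d34 (Or.inr h4) h.2)
    rw [eL]
    exact (Subtype.ext e4').symm
  by_cases h5 : (p : ℤ → A) ∈ V
  · have e1 : gU p = p := (hgU p).2.2 (by
      rintro ((h | h) | h)
      · exact nm d24 h h5
      · exact nm d14 h h5
      · exact nm d34 (Or.inl h) h5)
    have e2 : ((gV.symm (gU p) : ℤ → A)) = shiftFun (-1) ((gU p : ℤ → A)) :=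
      (hinvV _).1 (by rw [e1]; exact Or.inl h5)
    have e2' : ((gV.symm (gU p) : ℤ → A)) = shiftFun (-1) (p : ℤ → A) := by rw [e2, e1]
    by_cases hb : (p : ℤ → A) ∈ shiftSet 2 U
    · -- Case 4b : p ∈ V ∩ σ²U
      have m2U : ((gV.symm (gU p) : ℤ → A)) ∈ shiftSet 1 U := by
        rw [e2', shift_mem_iff]; norm_num; exact hb
      have e3 : ((gU.symm (gV.symm (gU p)) : ℤ → A)) = shiftFun (-1) ((gV.symm (gU p) : ℤ → A)) :=
        (hinvU _).1 (Or.inr m2U)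
      have e3' : ((gU.symm (gV.symm (gU p)) : ℤ → A)) = shiftFun (-2) (p : ℤ → A) := by
        rw [e3, e2', shift_shift]; norm_num
      have m3 : ((gU.symm (gV.symm (gU p)) : ℤ → A)) ∈ U := by
        rw [e3', mem_iff_shift]; norm_num; exact hb
      have e4 : gV (gU.symm (gV.symm (gU p))) = gU.symm (gV.symm (gU p)) := (hgV _).2.2 (by
        rintro ((h | h) | h)
        · exact nm d24 m3 h
        · exact nm d23 m3 (Or.inr h)
        · exact nm d25 m3 h)
      have eL : ((gW p : ℤ → A)) = shiftFun (-2) (p : ℤ → A) :=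
        (hgW p).2.1 (by rw [hWp]; exact ⟨hb, h5⟩)
      exact Subtype.ext (by rw [eL, e4, e3'])
    · -- Case 4a : p ∈ V, p ∉ σ²U
      have m2 : ((gV.symm (gU p) : ℤ → A)) ∈ shiftSet (-1) V := by
        rw [e2', shift_mem_iff]; norm_num [shiftSet_zero]; exact h5
      have e3 : gU.symm (gV.symm (gU p)) = gV.symm (gU p) := (hinvU _).2.2 (by
        rintro ((h | h) | h)
        · exact nm d23 h (Or.inr m2)
        · exact nm d13 h (Or.inr m2)
        · rw [e2', shift_mem_iff] at h; norm_num at h; exact hb h)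
      have e4 : ((gV (gU.symm (gV.symm (gU p))) : ℤ → A)) =
          shiftFun 1 ((gU.symm (gV.symm (gU p)) : ℤ → A)) :=
        (hgV _).1 (Or.inr (by rw [e3]; exact m2))
      have e4' : ((gV (gU.symm (gV.symm (gU p))) : ℤ → A)) = (p : ℤ → A) := by
        rw [e4, e3, e2', shift_shift]; norm_num [shift_zero]
      have eL : gW p = p := (hgW p).2.2 (by
        rintro ((⟨hu, hv⟩ | h) | h)
        · exact nm d34 (Or.inl hu) h5
        · rw [hWm] at h; exact nm d24 h.1 h5
        · rw [hWp] at h; exact hb h.1)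
      rw [eL]
      exact (Subtype.ext e4').symm
  by_cases h6 : (p : ℤ → A) ∈ shiftSet 1 V
  · -- Case 5 : p ∈ σV
    have e1 : gU p = p := (hgU p).2.2 (by
      rintro ((h | h) | h)
      · exact nm d25 h h6
      · exact nm d15 h h6
      · exact nm d35 (Or.inl h) h6)
    have e2 : ((gV.symm (gU p) : ℤ → A)) = shiftFun (-1) ((gU p : ℤ → A)) :=
      (hinvV _).1 (by rw [e1]; exact Or.inr h6)
    have e2' : ((gV.symm (gU p) : ℤ → A)) = shiftFun (-1) (p : ℤ → A) := by rw [e2, e1]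
    have m2 : ((gV.symm (gU p) : ℤ → A)) ∈ V := by
      rw [e2', mem_iff_shift]; norm_num; exact h6
    have e3 : gU.symm (gV.symm (gU p)) = gV.symm (gU p) := (hinvU _).2.2 (by
      rintro ((h | h) | h)
      · exact nm d24 h m2
      · exact nm d14 h m2
      · exact nm d34 (Or.inl h) m2)
    have e4 : ((gV (gU.symm (gV.symm (gU p))) : ℤ → A)) =
        shiftFun 1 ((gU.symm (gV.symm (gU p)) : ℤ → A)) :=
      (hgV _).1 (Or.inl (by rw [e3]; exact m2))
    have e4' : ((gV (gU.symm (gV.symm (gU p))) : ℤ → A)) = (p : ℤ → A) := by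
      rw [e4, e3, e2', shift_shift]; norm_num [shift_zero]
    have eL : gW p = p := (hgW p).2.2 (by
      rintro ((⟨hu, hv⟩ | h) | h)
      · exact nm d35 (Or.inl hu) h6
      · rw [hWm] at h; exact nm d25 h.1 h6
      · rw [hWp] at h; exact nm d45 h.2 h6)
    rw [eL]
    exact (Subtype.ext e4').symm
  · -- Case 6 : p in none of the sets
    have e1 : gU p = p := (hgU p).2.2 (by
      rintro ((h | h) | h)
      · exact h2 h
      · exact h1 h
      · exact h3 h)
    have e2 : gV.symm (gU p) = gU p := (hinvV _).2.2 (by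
      rw [e1]
      rintro ((h | h) | h)
      · exact h5 h
      · exact h4 h
      · exact h6 h)
    have e3 : gU.symm (gV.symm (gU p)) = gV.symm (gU p) := (hinvU _).2.2 (by
      rw [e2, e1]
      rintro ((h | h) | h)
      · exact h2 h
      · exact h1 h
      · exact h3 h)
    have e4 : gV (gU.symm (gV.symm (gU p))) = gU.symm (gV.symm (gU p)) := (hgV _).2.2 (by
      rw [e3, e2, e1]
      rintro ((h | h) | h)
      · exact h5 h
      · exact h4 h
      · exact h6 h)
    have eL : gW p = p := (hgW p).2.2 (by
      rintro ((⟨hu, hv⟩ | h) | h)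
      · exact h3 hu
      · rw [hWm] at h; exact h2 h.1
      · rw [hWp] at h; exact h5 h.2)
    rw [eL, e4, e3, e2, e1]
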